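/- arXiv:2411.01052 — 2 statements merged into one kernel-verified Lean document; each statement's English description precedes it below -/
import Mathlib

section
/- For any probability measures μ, ν on ℝⁿ with finite second moment and invertible covariance, ℱ(μ,ν) ≤ 𝒢(μ,ν), where ℱ is the White Fourier discrepancy and 𝒢 the Gini discrepancy. -/
open MeasureTheory ProbabilityTheory Matrix

noncomputable section

/-- Euclidean norm of a vector in `ℝⁿ`. -/
def eN {n : ℕ} (v : Fin n → ℝ) : ℝ := Real.sqrt (∑ i, v i ^ 2)

/-- The characteristic function (Fourier transform) of `μ`. -/
def charF {n : ℕ} (μ : Measure (Fin n → ℝ)) (ξ : Fin n → ℝ) : ℂ :=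
  ∫ x, Complex.exp (-Complex.I * ∑ i, (ξ i : ℂ) * (x i : ℂ)) ∂μ

/-- The gradient of the characteristic function of `μ`. -/
def gradCharF {n : ℕ} (μ : Measure (Fin n → ℝ)) (ξ : Fin n → ℝ) (j : Fin n) : ℂ :=
  ∫ x, -Complex.I * (x j : ℂ) * Complex.exp (-Complex.I * ∑ i, (ξ i : ℂ) * (x i : ℂ)) ∂μ

/-- Euclidean norm of a complex vector. -/
def cN {n : ℕ} (v : Fin n → ℂ) : ℝ := Real.sqrt (∑ i, ‖v i‖ ^ 2)

/-- The Fourier discrepancy `sup_ξ |f̂₁ ∇f̂₂ − f̂₂ ∇f̂₁|` between two (whitened)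
measures. -/
def Fdisc {n : ℕ} (μ ν : Measure (Fin n → ℝ)) : ℝ :=
  ⨆ ξ : Fin n → ℝ, cN fun j => charF μ ξ * gradCharF ν ξ j - charF ν ξ * gradCharF μ ξ j

/-!
By Fubini, `f̂₁(ξ) ∇f̂₂(ξ) − f̂₂(ξ) ∇f̂₁(ξ)` is the `μ ⊗ ν`-integral of `−i (y − x) e^{−iξᵀ(x+y)}`,
a vector of norm `|x − y|`; the norm of the integral is at most the integral of the norm, uniformly
in `ξ`.
-/

section Phase

variable {n : ℕ} (ξ : Fin n → ℝ)

def expPhase (x : Fin n → ℝ) : ℂ := Complex.exp (-Complex.I * ∑ i, (ξ i : ℂ) * (x i : ℂ))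

lemma norm_expPhase (x : Fin n → ℝ) : ‖expPhase ξ x‖ = 1 := by
  have : ∑ i, (ξ i : ℂ) * (x i : ℂ) = ((∑ i, ξ i * x i : ℝ) : ℂ) := by push_cast; rfl
  rw [expPhase, this, Complex.norm_exp]
  simp

lemma continuous_expPhase : Continuous (expPhase ξ) := by
  unfold expPhase
  fun_prop

variable (μ : Measure (Fin n → ℝ))

lemma integrable_expPhase [IsFiniteMeasure μ] : Integrable (expPhase ξ) μ :=
  (integrable_const (1 : ℝ)).mono' (continuous_expPhase ξ).aestronglyMeasurable
    (.of_forall fun x => (norm_expPhase ξ x).le)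

lemma integrable_coord_mul_expPhase {j : Fin n} (hμ : Integrable (fun x => x j) μ) :
    Integrable (fun x => -Complex.I * (x j : ℂ) * expPhase ξ x) μ := by
  refine hμ.abs.mono' (by unfold expPhase; fun_prop) (.of_forall fun x => ?_)
  simp [norm_expPhase]

end Phase

/-- The integrand `−i (y − x) e^{−iξᵀ(x+y)}` of the paper's identity, as a vector of `ℂⁿ`. -/
def wronskianIntegrand {n : ℕ} (ξ : Fin n → ℝ) (p : (Fin n → ℝ) × (Fin n → ℝ)) :
    EuclideanSpace ℂ (Fin n) :=
  WithLp.toLp 2 fun j => -Complex.I * ((p.2 j : ℂ) - p.1 j) * (expPhase ξ p.1 * expPhase ξ p.2)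

section Wronskian

variable {n : ℕ} (ξ : Fin n → ℝ)

lemma wronskianIntegrand_apply (p : (Fin n → ℝ) × (Fin n → ℝ)) (j : Fin n) :
    wronskianIntegrand ξ p j = expPhase ξ p.1 * (-Complex.I * p.2 j * expPhase ξ p.2)
      - (-Complex.I * p.1 j * expPhase ξ p.1) * expPhase ξ p.2 := by
  simp only [wronskianIntegrand, PiLp.toLp_apply]
  ring

lemma norm_wronskianIntegrand (p : (Fin n → ℝ) × (Fin n → ℝ)) :
    ‖wronskianIntegrand ξ p‖ = eN (p.1 - p.2) := by
  have hcoord : ∀ j, ‖wronskianIntegrand ξ p j‖ = |p.1 j - p.2 j| := fun j => by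
    rw [wronskianIntegrand, PiLp.toLp_apply, norm_mul, norm_mul, norm_mul, norm_expPhase,
      norm_expPhase, ← Complex.ofReal_sub, Complex.norm_real, Real.norm_eq_abs, abs_sub_comm]
    simp
  simp only [EuclideanSpace.norm_eq, eN, hcoord, sq_abs, Pi.sub_apply]

variable {μ ν : Measure (Fin n → ℝ)} [IsFiniteMeasure μ] [IsFiniteMeasure ν]
  (hμ : ∀ i, Integrable (fun x => x i) μ) (hν : ∀ i, Integrable (fun x => x i) ν)
include hμ hν

lemma integrable_wronskianIntegrand_apply (j : Fin n) :
    Integrable (fun p => wronskianIntegrand ξ p j) (μ.prod ν) := by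
  simp only [wronskianIntegrand_apply]
  exact ((integrable_expPhase ξ μ).mul_prod (integrable_coord_mul_expPhase ξ ν (hν j))).sub
    ((integrable_coord_mul_expPhase ξ μ (hμ j)).mul_prod (integrable_expPhase ξ ν))

lemma charF_mul_gradCharF_sub_eq_integral (j : Fin n) :
    charF μ ξ * gradCharF ν ξ j - charF ν ξ * gradCharF μ ξ j
      = ∫ p, wronskianIntegrand ξ p j ∂(μ.prod ν) := by
  simp only [wronskianIntegrand_apply]
  rw [integral_sub ((integrable_expPhase ξ μ).mul_prod (integrable_coord_mul_expPhase ξ ν (hν j)))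
    ((integrable_coord_mul_expPhase ξ μ (hμ j)).mul_prod (integrable_expPhase ξ ν)),
    integral_prod_mul (expPhase ξ) (fun y => -Complex.I * y j * expPhase ξ y),
    integral_prod_mul (fun x => -Complex.I * x j * expPhase ξ x) (expPhase ξ),
    mul_comm (charF ν ξ)]
  rfl

end Wronskian

lemma cN_eq_norm_toLp {n : ℕ} (v : Fin n → ℂ) :
    cN v = ‖(WithLp.toLp 2 v : EuclideanSpace ℂ (Fin n))‖ := by
  simp [cN, EuclideanSpace.norm_eq]

theorem Fdisc_le_integral_eN_prod {n : ℕ} (μ ν : Measure (Fin n → ℝ))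
    [IsFiniteMeasure μ] [IsFiniteMeasure ν]
    (hμ : ∀ i, Integrable (fun x => x i) μ) (hν : ∀ i, Integrable (fun x => x i) ν) :
    Fdisc μ ν ≤ ∫ p, eN (p.1 - p.2) ∂(μ.prod ν) := by
  refine ciSup_le fun ξ => ?_
  have hint := integrable_wronskianIntegrand_apply ξ hμ hν
  calc cN (fun j => charF μ ξ * gradCharF ν ξ j - charF ν ξ * gradCharF μ ξ j)
      = ‖∫ p, wronskianIntegrand ξ p ∂(μ.prod ν)‖ := by
        rw [cN_eq_norm_toLp]
        congr 1
        ext j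
        rw [PiLp.toLp_apply, eval_integral_piLp hint,
          charF_mul_gradCharF_sub_eq_integral ξ hμ hν]
    _ ≤ ∫ p, ‖wronskianIntegrand ξ p‖ ∂(μ.prod ν) := norm_integral_le_integral_norm _
    _ = ∫ p, eN (p.1 - p.2) ∂(μ.prod ν) := by simp_rw [norm_wronskianIntegrand]

lemma Matrix.measurable_mulVec {m k : Type*} [Fintype m] [Fintype k] (W : Matrix m k ℝ) :
    Measurable W.mulVec :=
  (continuous_const.matrix_mulVec continuous_id).measurable

lemma integrable_coord_map_mulVec {m n : ℕ} {μ : Measure (Fin n → ℝ)}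
    (hμ : ∀ i, Integrable (fun x => x i) μ) (W : Matrix (Fin m) (Fin n) ℝ) (i : Fin m) :
    Integrable (fun x => x i) (μ.map W.mulVec) := by
  rw [integrable_map_measure (measurable_pi_apply i).aestronglyMeasurable
    W.measurable_mulVec.aemeasurable]
  simp only [Function.comp_def, Matrix.mulVec, dotProduct]
  exact integrable_finsetSum _ fun k _ => (hμ k).const_mul _

theorem stmt11_general {n : ℕ} (μ ν : Measure (Fin n → ℝ))
    [IsProbabilityMeasure μ] [IsProbabilityMeasure ν]
    (hμ2 : ∀ i, MemLp (fun x => x i) 2 μ) (hν2 : ∀ i, MemLp (fun x => x i) 2 ν)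
    (Wμ Wν : Matrix (Fin n) (Fin n) ℝ) :
    Fdisc (μ.map Wμ.mulVec) (ν.map Wν.mulVec)
      ≤ ∫ p : (Fin n → ℝ) × (Fin n → ℝ), eN (p.1 - p.2)
          ∂((μ.map Wμ.mulVec).prod (ν.map Wν.mulVec)) :=
  Fdisc_le_integral_eN_prod _ _
    (integrable_coord_map_mulVec (fun i => (hμ2 i).integrable one_le_two) Wμ)
    (integrable_coord_map_mulVec (fun i => (hν2 i).integrable one_le_two) Wν)

/-- For probability measures with finite second moment and invertible covariance,
whitened by matrices `Wμ`, `Wν` (with `Wμ Σ_μ Wμᵀ = 1`, `Wν Σ_ν Wνᵀ = 1`), the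
White Fourier discrepancy is bounded by the Gini discrepancy:
`ℱ(μ,ν) ≤ 𝒢(μ,ν) = ∬ |x* − y*| dμ*(x*) dν*(y*)`. -/
theorem stmt11 {n : ℕ} (μ ν : Measure (Fin n → ℝ))
    [IsProbabilityMeasure μ] [IsProbabilityMeasure ν]
    (hμ2 : ∀ i, MemLp (fun x => x i) 2 μ) (hν2 : ∀ i, MemLp (fun x => x i) 2 ν)
    (Sμ Sν Wμ Wν : Matrix (Fin n) (Fin n) ℝ)
    (hSμ : ∀ i j, Sμ i j = ∫ x, (x i - ∫ x', x' i ∂μ) * (x j - ∫ x', x' j ∂μ) ∂μ)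
    (hSν : ∀ i j, Sν i j = ∫ y, (y i - ∫ y', y' i ∂ν) * (y j - ∫ y', y' j ∂ν) ∂ν)
    (hSμinv : IsUnit Sμ.det) (hSνinv : IsUnit Sν.det)
    (hWμ : Wμ * Sμ * Wμᵀ = 1) (hWν : Wν * Sν * Wνᵀ = 1) :
    Fdisc (μ.map Wμ.mulVec) (ν.map Wν.mulVec)
      ≤ ∫ p : (Fin n → ℝ) × (Fin n → ℝ), eN (p.1 - p.2)
          ∂((μ.map Wμ.mulVec).prod (ν.map Wν.mulVec)) :=
  stmt11_general μ ν hμ2 hν2 Wμ Wν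
end
end

section
/- Let μ, ν have whitened versions μ*, ν* (with identity covariances) and let π* be a W₁-optimal coupling of μ* and ν*. Then 𝒲(μ,ν) ≤ |m₁* − m₂*| + √(2n − 2 ∫ (x − m₁*)ᵀ(y − m₂*) dπ*(x,y)). -/
open MeasureTheory ProbabilityTheory Matrix

noncomputable section

/-- `π` is a coupling (transportation plan) between `μ` and `ν`. -/
def IsCoupling {n : ℕ} (μ ν : Measure (Fin n → ℝ))
    (π : Measure ((Fin n → ℝ) × (Fin n → ℝ))) : Prop :=
  π.map Prod.fst = μ ∧ π.map Prod.snd = ν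

/-- The 1-Wasserstein distance. -/
def W1 {n : ℕ} (μ ν : Measure (Fin n → ℝ)) : ℝ :=
  sInf { c | ∃ π : Measure ((Fin n → ℝ) × (Fin n → ℝ)),
    IsCoupling μ ν π ∧ c = ∫ p, eN (p.1 - p.2) ∂π }

/-! The triangle inequality `|x − y| ≤ |m₁ − m₂| + |(x − m₁) − (y − m₂)|`, integrated against the
coupling, bounds `𝒲(μ,ν)` by `|m₁ − m₂| + E|(x − m₁) − (y − m₂)|`. By Cauchy–Schwarz the last
expectation is at most the square root of `E|(x − m₁) − (y − m₂)|²`, and expanding the square,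
the unit diagonal of both covariance matrices turns this second moment into
`2n − 2 E[(x − m₁)ᵀ(y − m₂)]`. -/

section EuclideanNorm

variable {n : ℕ}

lemma eN_eq_norm_toLp (v : Fin n → ℝ) : eN v = ‖WithLp.toLp 2 v‖ := by
  simp [EuclideanSpace.norm_eq, eN]

lemma sq_eN (v : Fin n → ℝ) : eN v ^ 2 = ∑ i, v i ^ 2 :=
  Real.sq_sqrt (by positivity)

lemma eN_add_le (v w : Fin n → ℝ) : eN (v + w) ≤ eN v + eN w := by
  simpa only [eN_eq_norm_toLp, WithLp.toLp_add] using norm_add_le _ _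

lemma eN_sub_le_add_eN_sub_sub (x y a b : Fin n → ℝ) :
    eN (x - y) ≤ eN (a - b) + eN ((x - a) - (y - b)) := by
  have hsplit : x - y = (a - b) + ((x - a) - (y - b)) := by abel
  rw [hsplit]
  exact eN_add_le _ _

lemma memLp_eN {α : Type*} [MeasurableSpace α] {π : Measure α} {p : ENNReal}
    {X : α → Fin n → ℝ} (hX : ∀ i, MemLp (fun a => X a i) p π) :
    MemLp (fun a => eN (X a)) p π := by
  simp only [eN_eq_norm_toLp]
  exact ((PiLp.lipschitzWith_toLp 2 fun _ : Fin n => ℝ).comp_memLp (WithLp.toLp_zero 2)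
    (MemLp.of_eval hX)).norm

end EuclideanNorm

section SecondMoments

variable {α : Type*} [MeasurableSpace α] {π : Measure α}

lemma integral_le_sqrt_integral_sq [IsProbabilityMeasure π] {f : α → ℝ} (hf : MemLp f 2 π) :
    ∫ a, f a ∂π ≤ Real.sqrt (∫ a, f a ^ 2 ∂π) := by
  have hsq : (∫ a, f a ∂π) ^ 2 ≤ ∫ a, f a ^ 2 ∂π := by
    have h := variance_nonneg f π
    rw [variance_eq_sub hf] at h
    simpa using h
  exact (le_abs_self _).trans (Real.abs_le_sqrt hsq)

lemma integral_eN_sub_sq {n : ℕ} {X Y : α → Fin n → ℝ}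
    (hX : ∀ i, MemLp (fun a => X a i) 2 π) (hY : ∀ i, MemLp (fun a => Y a i) 2 π) :
    ∫ a, eN (X a - Y a) ^ 2 ∂π =
      ∑ i, ∫ a, X a i ^ 2 ∂π + ∑ i, ∫ a, Y a i ^ 2 ∂π - 2 * ∫ a, ∑ i, X a i * Y a i ∂π := by
  have hXX : Integrable (fun a => ∑ i, X a i ^ 2) π :=
    integrable_finsetSum _ fun i _ => (hX i).integrable_sq
  have hYY : Integrable (fun a => ∑ i, Y a i ^ 2) π :=
    integrable_finsetSum _ fun i _ => (hY i).integrable_sq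
  have hXY : Integrable (fun a => ∑ i, X a i * Y a i) π :=
    integrable_finsetSum _ fun i _ => (hX i).integrable_mul (hY i)
  have hexpand (a : α) : eN (X a - Y a) ^ 2 =
      ∑ i, X a i ^ 2 + ∑ i, Y a i ^ 2 - 2 * ∑ i, X a i * Y a i := by
    simp only [sq_eN, Pi.sub_apply, Finset.mul_sum, ← Finset.sum_add_distrib,
      ← Finset.sum_sub_distrib]
    exact Finset.sum_congr rfl fun i _ => by ring
  simp only [hexpand]
  rw [integral_sub (f := fun a => ∑ i, X a i ^ 2 + ∑ i, Y a i ^ 2) (hXX.add hYY)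
      (hXY.const_mul 2), integral_add hXX hYY, integral_const_mul,
    integral_finsetSum _ fun i _ => (hX i).integrable_sq,
    integral_finsetSum _ fun i _ => (hY i).integrable_sq]

end SecondMoments

namespace IsCoupling

variable {n : ℕ} {μ ν : Measure (Fin n → ℝ)} {π : Measure ((Fin n → ℝ) × (Fin n → ℝ))}

lemma measurePreserving_fst (hπ : IsCoupling μ ν π) : MeasurePreserving Prod.fst π μ :=
  ⟨measurable_fst, hπ.1⟩

lemma measurePreserving_snd (hπ : IsCoupling μ ν π) : MeasurePreserving Prod.snd π ν :=
  ⟨measurable_snd, hπ.2⟩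

lemma isProbabilityMeasure [IsProbabilityMeasure μ] (hπ : IsCoupling μ ν π) :
    IsProbabilityMeasure π :=
  ⟨by rw [← Set.preimage_univ (f := Prod.fst), ← Measure.map_apply measurable_fst .univ, hπ.1,
    measure_univ]⟩

lemma integral_comp_fst (hπ : IsCoupling μ ν π) {f : (Fin n → ℝ) → ℝ}
    (hf : AEStronglyMeasurable f μ) : ∫ p, f p.1 ∂π = ∫ x, f x ∂μ := by
  rw [← hπ.1] at hf ⊢
  exact (integral_map measurable_fst.aemeasurable hf).symm

lemma integral_comp_snd (hπ : IsCoupling μ ν π) {f : (Fin n → ℝ) → ℝ}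
    (hf : AEStronglyMeasurable f ν) : ∫ p, f p.2 ∂π = ∫ y, f y ∂ν := by
  rw [← hπ.2] at hf ⊢
  exact (integral_map measurable_snd.aemeasurable hf).symm

end IsCoupling

section Pairs

variable {n : ℕ} {π : Measure ((Fin n → ℝ) × (Fin n → ℝ))} [IsProbabilityMeasure π]

lemma integral_eN_sub_le_eN_add_sqrt (m₁ m₂ : Fin n → ℝ)
    (hx : ∀ i, MemLp (fun p : (Fin n → ℝ) × (Fin n → ℝ) => p.1 i) 2 π)
    (hy : ∀ i, MemLp (fun p : (Fin n → ℝ) × (Fin n → ℝ) => p.2 i) 2 π) :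
    ∫ p, eN (p.1 - p.2) ∂π ≤ eN (m₁ - m₂) + Real.sqrt
      (∑ i, ∫ p, (p.1 i - m₁ i) ^ 2 ∂π + ∑ i, ∫ p, (p.2 i - m₂ i) ^ 2 ∂π
        - 2 * ∫ p, ∑ i, (p.1 i - m₁ i) * (p.2 i - m₂ i) ∂π) := by
  have hX i : MemLp (fun p : (Fin n → ℝ) × (Fin n → ℝ) => p.1 i - m₁ i) 2 π :=
    (hx i).sub (memLp_const _)
  have hY i : MemLp (fun p : (Fin n → ℝ) × (Fin n → ℝ) => p.2 i - m₂ i) 2 π :=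
    (hy i).sub (memLp_const _)
  have hcentred :
      MemLp (fun p : (Fin n → ℝ) × (Fin n → ℝ) => eN ((p.1 - m₁) - (p.2 - m₂))) 2 π :=
    memLp_eN fun i => (hX i).sub (hY i)
  calc ∫ p, eN (p.1 - p.2) ∂π
      ≤ ∫ p, (eN (m₁ - m₂) + eN ((p.1 - m₁) - (p.2 - m₂))) ∂π :=
        integral_mono ((memLp_eN fun i => (hx i).sub (hy i)).integrable one_le_two)
          ((integrable_const _).add (hcentred.integrable one_le_two))
          fun p => eN_sub_le_add_eN_sub_sub p.1 p.2 m₁ m₂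
    _ = eN (m₁ - m₂) + ∫ p, eN ((p.1 - m₁) - (p.2 - m₂)) ∂π := by
        rw [integral_add (integrable_const _) (hcentred.integrable one_le_two), integral_const]
        simp
    _ ≤ eN (m₁ - m₂) + Real.sqrt (∫ p, eN ((p.1 - m₁) - (p.2 - m₂)) ^ 2 ∂π) := by
        gcongr; exact integral_le_sqrt_integral_sq hcentred
    _ = _ := by
        rw [integral_eN_sub_sq (X := fun p : (Fin n → ℝ) × (Fin n → ℝ) => p.1 - m₁)
          (Y := fun p => p.2 - m₂) hX hY]
        simp only [Pi.sub_apply]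

end Pairs

theorem stmt16_general {n : ℕ} (μ ν : Measure (Fin n → ℝ))
    [IsProbabilityMeasure μ]
    (m₁ m₂ : Fin n → ℝ)
    (hμ2 : ∀ i, MemLp (fun x => x i) 2 μ) (hν2 : ∀ i, MemLp (fun y => y i) 2 ν)
    (hcovμ : ∀ i j, ∫ x, (x i - m₁ i) * (x j - m₁ j) ∂μ
      = (1 : Matrix (Fin n) (Fin n) ℝ) i j)
    (hcovν : ∀ i j, ∫ y, (y i - m₂ i) * (y j - m₂ j) ∂ν
      = (1 : Matrix (Fin n) (Fin n) ℝ) i j)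
    (π : Measure ((Fin n → ℝ) × (Fin n → ℝ))) (hπ : IsCoupling μ ν π)
    (hopt : W1 μ ν = ∫ p, eN (p.1 - p.2) ∂π) :
    W1 μ ν ≤ eN (m₁ - m₂) +
      Real.sqrt (2 * n - 2 * ∫ p, (∑ i, (p.1 i - m₁ i) * (p.2 i - m₂ i)) ∂π) := by
  have := hπ.isProbabilityMeasure
  have hvarX i : ∫ p, (p.1 i - m₁ i) ^ 2 ∂π = 1 := by
    rw [hπ.integral_comp_fst (f := fun x => (x i - m₁ i) ^ 2)
      (by fun_prop : Measurable _).aestronglyMeasurable, ← one_apply_eq i, ← hcovμ i i]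
    simp only [sq]
  have hvarY i : ∫ p, (p.2 i - m₂ i) ^ 2 ∂π = 1 := by
    rw [hπ.integral_comp_snd (f := fun y => (y i - m₂ i) ^ 2)
      (by fun_prop : Measurable _).aestronglyMeasurable, ← one_apply_eq i, ← hcovν i i]
    simp only [sq]
  rw [hopt]
  convert integral_eN_sub_le_eN_add_sqrt m₁ m₂
    (fun i => (hμ2 i).comp_measurePreserving hπ.measurePreserving_fst)
    (fun i => (hν2 i).comp_measurePreserving hπ.measurePreserving_snd) using 4
  simp only [hvarX, hvarY, Finset.sum_const, Finset.card_univ, Fintype.card_fin, nsmul_eq_mul,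
    mul_one, two_mul]

/-- For (whitened) probability measures `μ*`, `ν*` with identity covariance
matrices and means `m₁*`, `m₂*`, and a `W₁`-optimal coupling `π*` of them,
`𝒲(μ,ν) ≤ |m₁* − m₂*| + √(2n − 2 ∫ (x − m₁*)ᵀ(y − m₂*) dπ*(x,y))`. -/
theorem stmt16 {n : ℕ} (μ ν : Measure (Fin n → ℝ))
    [IsProbabilityMeasure μ] [IsProbabilityMeasure ν]
    (m₁ m₂ : Fin n → ℝ)
    (hμ2 : ∀ i, MemLp (fun x => x i) 2 μ) (hν2 : ∀ i, MemLp (fun y => y i) 2 ν)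
    (hm₁ : ∀ i, ∫ x, x i ∂μ = m₁ i) (hm₂ : ∀ i, ∫ y, y i ∂ν = m₂ i)
    (hcovμ : ∀ i j, ∫ x, (x i - m₁ i) * (x j - m₁ j) ∂μ
      = (1 : Matrix (Fin n) (Fin n) ℝ) i j)
    (hcovν : ∀ i j, ∫ y, (y i - m₂ i) * (y j - m₂ j) ∂ν
      = (1 : Matrix (Fin n) (Fin n) ℝ) i j)
    (π : Measure ((Fin n → ℝ) × (Fin n → ℝ))) (hπ : IsCoupling μ ν π)
    (hopt : W1 μ ν = ∫ p, eN (p.1 - p.2) ∂π) :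
    W1 μ ν ≤ eN (m₁ - m₂) +
      Real.sqrt (2 * n - 2 * ∫ p, (∑ i, (p.1 i - m₁ i) * (p.2 i - m₂ i)) ∂π) :=
  stmt16_general μ ν m₁ m₂ hμ2 hν2 hcovμ hcovν π hπ hopt
end
end
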